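/- arXiv:2503.15200 — 2 statements merged into one kernel-verified Lean document; each statement's English description precedes it below -/
import Mathlib

section
/- Let Y = {e_1, ..., e_D} be the standard basis vectors of R^D (one-hot observations), and let λ ∈ (0,1) be rational. Define the memory trace of a finite history h = (y_0, y_{-1}, ..., y_{-(n-1)}) ∈ Y^n as z_λ(h) = (1-λ) Σ_{k=0}^{n-1} λ^k y_{-k}. Then z_λ is injective on the set of all finite histories: if h and h' are distinct finite sequences over Y, then z_λ(h) ≠ z_λ(h'). -/
open Polynomial

/-!
Coordinate `d` of the memory trace of a history is `(1 - λ) P_d(λ)`, where `P_d = ∑ X ^ k` over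
the times `k` at which the history shows `e_d`. Equal traces of two histories make `λ` a root of
every `P_d - P'_d`, an integer polynomial with coefficients in `{-1, 0, 1}`. A nonzero such
polynomial has leading coefficient `±1`, so `λ` would be integral over `ℤ`, hence (being rational)
an integer, which is impossible in `(0, 1)`. So all `P_d = P'_d`, i.e. the zero-padded histories
agree.
-/

theorem Polynomial.isIntegral_of_aeval_eq_zero_of_isUnit_leadingCoeff
    {R S : Type*} [CommRing R] [CommRing S] [Algebra R S] {p : R[X]} {x : S}
    (hp : IsUnit p.leadingCoeff) (hx : aeval x p = 0) : IsIntegral R x := by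
  simpa [smul_smul] using (isIntegral_leadingCoeff_smul p x hx).smul ((hp.unit⁻¹ : Rˣ) : R)

theorem Polynomial.eq_zero_of_aeval_eq_zero_of_not_isIntegral
    {R S : Type*} [CommRing R] [CommRing S] [Algebra R S] {p : R[X]} {x : S}
    (hcoeff : ∀ k, p.coeff k = 0 ∨ IsUnit (p.coeff k)) (hx : ¬IsIntegral R x)
    (hp : aeval x p = 0) : p = 0 := by
  by_contra hp0
  exact hx <| isIntegral_of_aeval_eq_zero_of_isUnit_leadingCoeff
    ((hcoeff _).resolve_left (leadingCoeff_ne_zero.mpr hp0)) hp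

theorem Rat.not_isIntegral_int_cast_of_pos_of_lt_one (K : Type*) [Field K] [CharZero K] {q : ℚ}
    (h0 : 0 < q) (h1 : q < 1) : ¬IsIntegral ℤ (q : K) := by
  rw [← eq_ratCast (algebraMap ℚ K), isIntegral_algebraMap_iff (algebraMap ℚ K).injective]
  intro hq
  obtain ⟨z, rfl⟩ := IsIntegrallyClosed.isIntegral_iff.mp hq
  rw [algebraMap_int_eq, eq_intCast] at h0 h1
  norm_cast at h0 h1
  omega

section History

variable {n D : ℕ}

noncomputable def occurrencePoly (y : Fin n → Fin D) (d : Fin D) : ℤ[X] :=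
  ∑ k : Fin n, if y k = d then X ^ (k : ℕ) else 0

theorem coeff_occurrencePoly (y : Fin n → Fin D) (d : Fin D) (j : ℕ) :
    (occurrencePoly y d).coeff j = if h : j < n then (if y ⟨j, h⟩ = d then 1 else 0) else 0 := by
  simp only [occurrencePoly, finsetSum_coeff, apply_ite (fun p : ℤ[X] => p.coeff j), coeff_X_pow,
    coeff_zero]
  by_cases hj : j < n
  · rw [dif_pos hj, Finset.sum_eq_single ⟨j, hj⟩
      (fun k _ hk => by simp [Fin.ext_iff.not.mp hk.symm]) (by simp)]
    simp
  · rw [dif_neg hj]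
    exact Finset.sum_eq_zero fun k _ => by simp [show j ≠ k by omega]

theorem coeff_occurrencePoly_sub_eq_zero_or_isUnit (y : Fin n → Fin D) {n' : ℕ}
    (y' : Fin n' → Fin D) (d : Fin D) (j : ℕ) :
    (occurrencePoly y d - occurrencePoly y' d).coeff j = 0 ∨
      IsUnit ((occurrencePoly y d - occurrencePoly y' d).coeff j) := by
  rw [coeff_sub, coeff_occurrencePoly, coeff_occurrencePoly, Int.isUnit_iff]
  split_ifs <;> omega

noncomputable def paddedHistory (𝕜 : Type*) [RCLike 𝕜] (y : Fin n → Fin D) :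
    ℕ → EuclideanSpace 𝕜 (Fin D) :=
  fun k => if hk : k < n then EuclideanSpace.single (y ⟨k, hk⟩) 1 else 0

variable {𝕜 : Type*} [RCLike 𝕜]

theorem aeval_occurrencePoly (lam : 𝕜) (y : Fin n → Fin D) (d : Fin D) :
    aeval lam (occurrencePoly y d) =
      (∑ k : Fin n, lam ^ (k : ℕ) • EuclideanSpace.single (𝕜 := 𝕜) (y k) 1) d := by
  simp [occurrencePoly, map_sum, apply_ite, Pi.single_apply, eq_comm]

theorem paddedHistory_apply (y : Fin n → Fin D) (k : ℕ) (d : Fin D) :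
    paddedHistory 𝕜 y k d = (occurrencePoly y d).coeff k := by
  by_cases hk : k < n <;> simp [paddedHistory, coeff_occurrencePoly, hk, eq_comm]

theorem paddedHistory_eq_of_occurrencePoly_eq {y : Fin n → Fin D} {n' : ℕ} {y' : Fin n' → Fin D}
    (h : ∀ d, occurrencePoly y d = occurrencePoly y' d) :
    paddedHistory 𝕜 y = paddedHistory 𝕜 y' := by
  ext k d
  rw [paddedHistory_apply, paddedHistory_apply, h]

end History

/-- Injectivity of the memory trace on finite one-hot histories for rational λ ∈ (0,1).
Histories are compared after zero-padding. -/
theorem memory_trace_finite_injective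
    (D : ℕ) (lam : ℝ) (hrat : ∃ q : ℚ, (q : ℝ) = lam)
    (h0 : 0 < lam) (h1 : lam < 1)
    (n n' : ℕ) (y : Fin n → Fin D) (y' : Fin n' → Fin D)
    (hne : (fun k : ℕ => if hk : k < n then
        EuclideanSpace.single (𝕜 := ℝ) (y ⟨k, hk⟩) 1 else 0)
      ≠ (fun k : ℕ => if hk : k < n' then
        EuclideanSpace.single (𝕜 := ℝ) (y' ⟨k, hk⟩) 1 else 0)) :
    (1 - lam) • ∑ k : Fin n, lam ^ (k : ℕ) • EuclideanSpace.single (𝕜 := ℝ) (y k) 1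
      ≠ (1 - lam) • ∑ k : Fin n', lam ^ (k : ℕ) • EuclideanSpace.single (𝕜 := ℝ) (y' k) 1 := by
  obtain ⟨q, rfl⟩ := hrat
  have hq : ¬IsIntegral ℤ (q : ℝ) :=
    Rat.not_isIntegral_int_cast_of_pos_of_lt_one ℝ (by exact_mod_cast h0) (by exact_mod_cast h1)
  intro heq
  have htrace := smul_right_injective _ (sub_ne_zero.mpr h1.ne') heq
  refine hne (paddedHistory_eq_of_occurrencePoly_eq fun d => sub_eq_zero.mp ?_)
  refine eq_zero_of_aeval_eq_zero_of_not_isIntegral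
    (coeff_occurrencePoly_sub_eq_zero_or_isUnit y y' d) hq ?_
  rw [map_sub, aeval_occurrencePoly, aeval_occurrencePoly, htrace, sub_self]
end

section
/- Let Y be the set of standard basis vectors of R^D and λ ∈ [0, 1/2]. If h and h̄ are two infinite histories over Y that differ within the first m observations (there exists 0 ≤ k < m with y_{-k} ≠ ȳ_{-k}), then ‖z_λ(h) − z_λ(h̄)‖ ≥ √2 · (1 − 2λ) · λ^{m−1}. -/
/-! Let k₀ be the first time the histories disagree. The term at k₀ contributes
(1 - λ) λ^{k₀} (e_i - e_j), of norm √2 (1 - λ) λ^{k₀}, while every later term has norm at most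
√2 (1 - λ) λ^k, so the tail has norm at most √2 λ^{k₀ + 1}. For λ ≤ 1/2 the leading term wins,
with margin √2 λ^{k₀} (1 - 2λ) ≥ √2 (1 - 2λ) λ^{m - 1}. -/

open Finset

theorem Orthonormal.norm_sub_of_ne {ι E : Type*} [NormedAddCommGroup E] [InnerProductSpace ℝ E]
    {v : ι → E} (hv : Orthonormal ℝ v) {i j : ι} (hij : i ≠ j) : ‖v i - v j‖ = √2 := by
  rw [← Real.sqrt_sq (norm_nonneg _), norm_sub_sq_real, hv.norm_eq_one, hv.norm_eq_one,
    hv.inner_eq_zero hij]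
  norm_num

theorem Orthonormal.norm_sub_le {ι E : Type*} [NormedAddCommGroup E] [InnerProductSpace ℝ E]
    {v : ι → E} (hv : Orthonormal ℝ v) (i j : ι) : ‖v i - v j‖ ≤ √2 := by
  rcases eq_or_ne i j with rfl | hij
  · simp
  · exact (hv.norm_sub_of_ne hij).le

section GeometricWeights

variable {E : Type*} [NormedAddCommGroup E] [NormedSpace ℝ E] {r c : ℝ} {g : ℕ → E}

theorem summable_pow_smul_of_norm_le [CompleteSpace E] (hr0 : 0 ≤ r) (hr1 : r < 1)
    (hg : ∀ k, ‖g k‖ ≤ c) : Summable fun k => r ^ k • g k :=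
  ((summable_geometric_of_lt_one hr0 hr1).mul_right c).of_norm_bounded fun k => by
    rw [norm_smul, Real.norm_of_nonneg (pow_nonneg hr0 k)]
    exact mul_le_mul_of_nonneg_left (hg k) (pow_nonneg hr0 k)

theorem le_norm_tsum_pow_smul_of_first_nonzero [CompleteSpace E] (hr0 : 0 ≤ r) (hr1 : r < 1)
    (n : ℕ) (hzero : ∀ k < n, g k = 0) (hlead : c ≤ ‖g n‖) (hbound : ∀ k, ‖g k‖ ≤ c) :
    c * r ^ n * (1 - 2 * r) ≤ (1 - r) * ‖∑' k, r ^ k • g k‖ := by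
  set tail := ∑' k, r ^ (k + (n + 1)) • g (k + (n + 1))
  have hhead : ∑ k ∈ range (n + 1), r ^ k • g k = r ^ n • g n := by
    rw [sum_range_succ, sum_eq_zero fun k hk => by rw [hzero k (mem_range.mp hk), smul_zero],
      zero_add]
  have htail : ‖tail‖ ≤ c * r ^ (n + 1) * (1 - r)⁻¹ := by
    refine tsum_of_norm_bounded (g := fun k => c * r ^ (n + 1) * r ^ k)
      ((hasSum_geometric_of_lt_one hr0 hr1).mul_left _) fun k => ?_
    rw [norm_smul, Real.norm_of_nonneg (pow_nonneg hr0 _), pow_add]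
    have := mul_le_mul_of_nonneg_left (hbound (k + (n + 1)))
      (mul_nonneg (pow_nonneg hr0 k) (pow_nonneg hr0 (n + 1)))
    linarith
  rw [← (summable_pow_smul_of_norm_le hr0 hr1 hbound).sum_add_tsum_nat_add (n + 1), hhead]
  have hsplit : r ^ n * c - ‖tail‖ ≤ ‖r ^ n • g n + tail‖ := by
    refine le_trans ?_ (norm_sub_le_norm_add _ _)
    rw [norm_smul, Real.norm_of_nonneg (pow_nonneg hr0 n)]
    gcongr
  have htail_scaled : (1 - r) * (c * r ^ (n + 1) * (1 - r)⁻¹) = c * r ^ n * r := by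
    field_simp [(sub_pos.mpr hr1).ne']
    ring
  linarith [mul_le_mul_of_nonneg_left hsplit (sub_pos.mpr hr1).le,
    mul_le_mul_of_nonneg_left htail (sub_pos.mpr hr1).le]

end GeometricWeights

/-- Separation: if λ ∈ [0, 1/2] and two infinite one-hot histories differ within
their first m observations, then their memory traces are at distance at least
√2 · (1 − 2λ) · λ^{m−1}. -/
theorem memory_trace_separation
    (D : ℕ) (lam : ℝ) (h0 : 0 ≤ lam) (h1 : lam ≤ 1 / 2)
    (m : ℕ) (h hbar : ℕ → Fin D)
    (hdiff : ∃ k < m, h k ≠ hbar k) :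
    ‖(1 - lam) • ∑' k : ℕ, lam ^ k • EuclideanSpace.single (𝕜 := ℝ) (h k) 1
      - (1 - lam) • ∑' k : ℕ, lam ^ k • EuclideanSpace.single (𝕜 := ℝ) (hbar k) 1‖
      ≥ Real.sqrt 2 * (1 - 2 * lam) * lam ^ (m - 1) := by
  have hv := EuclideanSpace.orthonormal_single (𝕜 := ℝ) (ι := Fin D)
  have hlam1 : lam < 1 := by linarith
  have hsummable (g : ℕ → Fin D) :=
    summable_pow_smul_of_norm_le h0 hlam1 fun k => (hv.norm_eq_one (g k)).le
  have hex : ∃ k, h k ≠ hbar k := hdiff.imp fun _ => And.right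
  obtain ⟨k₁, hk₁m, hk₁⟩ := hdiff
  have hfirst : Nat.find hex ≤ m - 1 := by have := Nat.find_min' hex hk₁; omega
  have key := le_norm_tsum_pow_smul_of_first_nonzero h0 hlam1 (Nat.find hex)
    (fun k hk => by rw [not_not.mp (Nat.find_min hex hk), sub_self])
    (hv.norm_sub_of_ne (Nat.find_spec hex)).ge (fun k => hv.norm_sub_le (h k) (hbar k))
  rw [← smul_sub, ← (hsummable h).tsum_sub (hsummable hbar), norm_smul,
    Real.norm_of_nonneg (by linarith)]
  simp only [← smul_sub]
  calc √2 * (1 - 2 * lam) * lam ^ (m - 1) ≤ √2 * lam ^ Nat.find hex * (1 - 2 * lam) := by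
        rw [mul_right_comm]
        exact mul_le_mul_of_nonneg_right (mul_le_mul_of_nonneg_left
          (pow_le_pow_of_le_one h0 hlam1.le hfirst) (Real.sqrt_nonneg 2)) (by linarith)
    _ ≤ _ := key
end
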